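/- arXiv:1407.6816 — 2 statements merged into one kernel-verified Lean document; each statement's English description precedes it below -/
import Mathlib

section
/- Let d ≥ 2, let {𝒫^(b)}_{b=1}^{d+1} be a set of d+1 mutually unbiased measurements on ℂ^d with efficiency parameter κ, let ρ be a density operator on ℂ^d, and let α ≥ 2 be a real number. Then (1/(d+1)) Σ_{b=1}^{d+1} R_α(𝒫^(b)|ρ) ≥ (α/(2(1−α))) · ln((κ+1)/(d+1)). -/
/-!
Let `C_b = ∑ₙ (p_n^b)²` be the collision probability of the `b`-th measurement. Since
`‖p‖_α ≤ ‖p‖₂` for `α ≥ 2`, `R_α(𝒫^b|ρ) ≥ α / (2(1 - α)) · ln C_b`, and by concavity of `ln`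
it suffices to show `∑_b C_b ≤ κ + 1`.

For this put `a_bn = p_n^b - 1/d`, `w = ∑ a_bn P_n^b` and `σ = ρ - I/d`. The trace relations give
`Tr(wσ) = ∑ a_bn² =: S` and `Tr(w²) = (κ - (1 - κ)/(d - 1)) S`, while
`Tr(σ²) = Tr(ρ²) - 1/d ≤ 1 - 1/d`. Cauchy–Schwarz for the Hilbert–Schmidt pairing of the
Hermitian matrices `w` and `σ` then yields `S ≤ κ - 1/d`, which is `∑_b C_b ≤ κ + 1`.
-/

open Matrix Finset Real
open scoped ComplexOrder

namespace Matrix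

variable {n 𝕜 : Type*} [Fintype n] [RCLike 𝕜]

open scoped MatrixOrder in
lemma PosSemidef.trace_mul_nonneg {A B : Matrix n n 𝕜} (hA : A.PosSemidef)
    (hB : B.PosSemidef) : 0 ≤ (A * B).trace := by
  classical
  obtain ⟨C, rfl⟩ := CStarAlgebra.nonneg_iff_eq_star_mul_self.mp hB.nonneg
  rw [star_eq_conjTranspose, ← Matrix.mul_assoc, trace_mul_comm, ← Matrix.mul_assoc]
  exact (hA.mul_mul_conjTranspose_same C).trace_nonneg

lemma PosSemidef.re_trace_mul_self_le {A : Matrix n n 𝕜} (hA : A.PosSemidef) :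
    RCLike.re (A * A).trace ≤ RCLike.re A.trace ^ 2 := by
  classical
  have hsq : (A * A).trace = ∑ i, ((hA.1.eigenvalues i ^ 2 : ℝ) : 𝕜) := by
    conv_lhs => rw [hA.1.spectral_theorem, ← map_mul, Unitary.conjStarAlgAut_apply,
      trace_mul_cycle, Unitary.coe_star_mul_self, Matrix.one_mul, diagonal_mul_diagonal,
      trace_diagonal]
    simp [sq]
  rw [hsq, hA.1.trace_eq_sum_eigenvalues, map_sum, map_sum]
  simp only [RCLike.ofReal_re]
  exact sum_sq_le_sq_sum_of_nonneg fun i _ ↦ hA.eigenvalues_nonneg i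

lemma IsHermitian.re_trace_mul_sq_le {A B : Matrix n n 𝕜} (hA : A.IsHermitian)
    (hB : B.IsHermitian) :
    RCLike.re (A * B).trace ^ 2 ≤ RCLike.re (A * A).trace * RCLike.re (B * B).trace := by
  have hquad : ∀ t : ℝ, 0 ≤ RCLike.re (A * A).trace * (t * t)
      + (-2 * RCLike.re (A * B).trace) * t + RCLike.re (B * B).trace := by
    intro t
    have hX : (t • A - B)ᴴ = t • A - B := ((hA.smul (IsSelfAdjoint.all t)).sub hB).eq
    have h0 := (posSemidef_conjTranspose_mul_self (t • A - B)).trace_nonneg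
    rw [hX] at h0
    have h1 := (RCLike.nonneg_iff.mp h0).1
    simp only [sub_mul, mul_sub, Matrix.smul_mul, Matrix.mul_smul, trace_sub, trace_smul,
      map_sub, RCLike.smul_re, trace_mul_comm B A] at h1
    nlinarith
  have := discrim_le_zero hquad
  rw [discrim] at this
  nlinarith

end Matrix

section Probabilities

variable {n ι : Type*} [Fintype n] [Fintype ι]

lemma nonneg_of_ofReal_eq_trace_mul {P ρ : Matrix n n ℂ} {p : ℝ} (hP : P.PosSemidef)
    (hρ : ρ.PosSemidef) (hp : (p : ℂ) = (P * ρ).trace) : 0 ≤ p :=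
  Complex.zero_le_real.mp (hp ▸ hP.trace_mul_nonneg hρ)

lemma sum_eq_one_of_ofReal_eq_trace_mul [DecidableEq n] {P : ι → Matrix n n ℂ} {ρ : Matrix n n ℂ}
    (hP : ∑ i, P i = 1) (hρ : ρ.trace = 1) {p : ι → ℝ} (hp : ∀ i, (p i : ℂ) = (P i * ρ).trace) :
    ∑ i, p i = 1 := by
  have : ((∑ i, p i : ℝ) : ℂ) = 1 := by
    simp only [Complex.ofReal_sum, hp, ← trace_sum, ← Finset.sum_mul, hP, Matrix.one_mul, hρ]
  exact_mod_cast this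

end Probabilities

lemma sum_sum_mul_mul_ite_of_sum_eq_zero {R ι : Type*} [CommRing R] [Fintype ι] [DecidableEq ι]
    (x y : ι → R) (hy : ∑ i, y i = 0) (κ c : R) :
    ∑ i, ∑ j, x i * y j * (if i = j then κ else c) = (κ - c) * ∑ i, x i * y i := by
  have hsplit : ∀ i j, x i * y j * (if i = j then κ else c)
      = (if i = j then (κ - c) * (x i * y i) else 0) + c * x i * y j := by
    intro i j
    split_ifs with h
    · subst h; ring
    · ring
  simp only [hsplit, sum_add_distrib, sum_ite_eq, mem_univ, if_true, ← mul_sum, hy, mul_zero,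
    add_zero]

lemma sum_sum_sum_sum_mul_mul_ite_ite_of_sum_eq_zero {R B ι : Type*} [CommRing R] [Fintype B]
    [DecidableEq B] [Fintype ι] [DecidableEq ι] (a : B → ι → R) (ha : ∀ b, ∑ i, a b i = 0)
    (κ c e : R) :
    ∑ b, ∑ i, ∑ b', ∑ j, a b i * a b' j * (if b = b' then if i = j then κ else c else e)
      = (κ - c) * ∑ b, ∑ i, a b i ^ 2 := by
  have hblock : ∀ b b', ∑ i, ∑ j, a b i * a b' j * (if b = b' then if i = j then κ else c else e)
      = if b = b' then (κ - c) * ∑ i, a b i ^ 2 else 0 := by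
    intro b b'
    split_ifs with h
    · subst h
      simp only [sum_sum_mul_mul_ite_of_sum_eq_zero _ _ (ha b), sq]
    · simp only [← Finset.sum_mul, ← Finset.mul_sum, ha b', mul_zero, zero_mul,
        sum_const_zero]
  rw [Finset.mul_sum]
  calc _ = ∑ b, ∑ b', ∑ i, ∑ j,
        a b i * a b' j * (if b = b' then if i = j then κ else c else e) :=
      sum_congr rfl fun b _ ↦ sum_comm
    _ = _ := by simp only [hblock, sum_ite_eq, mem_univ, if_true]

lemma re_trace_sum_smul_mul_sum_smul {n ι ι' : Type*} [Fintype n] [Fintype ι] [Fintype ι']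
    (a : ι → ℝ) (b : ι' → ℝ) (P : ι → Matrix n n ℂ) (Q : ι' → Matrix n n ℂ) :
    ((∑ i, a i • P i) * ∑ j, b j • Q j).trace.re
      = ∑ i, ∑ j, a i * b j * (P i * Q j).trace.re := by
  simp only [Finset.sum_mul, Finset.mul_sum, Matrix.smul_mul, Matrix.mul_smul, trace_sum,
    trace_smul, Complex.re_sum, Complex.smul_re, smul_eq_mul]
  rw [sum_comm]
  exact sum_congr rfl fun i _ ↦ sum_congr rfl fun j _ ↦ by ring

lemma re_trace_sum_smul_mul {n ι : Type*} [Fintype n] [Fintype ι] (a : ι → ℝ)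
    (P : ι → Matrix n n ℂ) (M : Matrix n n ℂ) :
    ((∑ i, a i • P i) * M).trace.re = ∑ i, a i * (P i * M).trace.re := by
  simp only [Finset.sum_mul, Matrix.smul_mul, trace_sum, trace_smul, Complex.re_sum,
    Complex.smul_re, smul_eq_mul]

lemma sum_sum_sq_sub_inv_le {B : Type*} [Fintype B] (d : ℕ) (hd : 2 ≤ d) (κ : ℝ)
    (hκ : 1 / (d : ℝ) ≤ κ) (P : B → Fin d → Matrix (Fin d) (Fin d) ℂ)
    (hP : ∀ b n, (P b n).IsHermitian) (hsum : ∀ b, ∑ n, P b n = 1)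
    (htr1 : ∀ b n, (P b n).trace = 1)
    (htr2 : ∀ b b', b ≠ b' → ∀ n n', (P b n * P b' n').trace = ((1 / (d : ℝ) : ℝ) : ℂ))
    (htr3 : ∀ b n n', (P b n * P b n').trace =
      if n = n' then ((κ : ℝ) : ℂ) else (((1 - κ) / ((d : ℝ) - 1) : ℝ) : ℂ))
    (ρ : Matrix (Fin d) (Fin d) ℂ) (hρ : ρ.PosSemidef) (hρtr : ρ.trace = 1)
    (p : B → Fin d → ℝ) (hp : ∀ b n, ((p b n : ℝ) : ℂ) = (P b n * ρ).trace) :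
    ∑ b, ∑ n, (p b n - 1 / d) ^ 2 ≤ κ - 1 / d := by
  classical
  have hd' : (2 : ℝ) ≤ d := by exact_mod_cast hd
  have hd0 : (d : ℝ) ≠ 0 := by positivity
  have hd1 : (d : ℝ) - 1 ≠ 0 := by linarith
  set c := (1 - κ) / ((d : ℝ) - 1)
  set a : B → Fin d → ℝ := fun b n ↦ p b n - 1 / d
  set S := ∑ b, ∑ n, a b n ^ 2
  have ha (b : B) : ∑ n, a b n = 0 := by
    simp [a, sum_sub_distrib, sum_eq_one_of_ofReal_eq_trace_mul (hsum b) hρtr (hp b), hd0]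
  set w : Matrix (Fin d) (Fin d) ℂ := ∑ x : B × Fin d, a x.1 x.2 • P x.1 x.2
  set σ : Matrix (Fin d) (Fin d) ℂ := ρ - (d : ℝ)⁻¹ • 1
  have hw : w.IsHermitian :=
    isSelfAdjoint_sum _ fun x _ ↦ (hP x.1 x.2).smul (IsSelfAdjoint.all _)
  have hσ : σ.IsHermitian := hρ.1.sub (isHermitian_one.smul (IsSelfAdjoint.all _))
  have hPσ (b : B) (n : Fin d) : (P b n * σ).trace.re = a b n := by
    simp only [σ, a, Matrix.mul_sub, Matrix.mul_smul, trace_sub, trace_smul,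
      ← hp, htr1, Complex.sub_re, Complex.ofReal_re, Complex.smul_re, Complex.one_re,
      smul_eq_mul, mul_one, one_div]
  have hwσ : (w * σ).trace.re = S := by
    simp only [w]
    rw [re_trace_sum_smul_mul]
    simp only [hPσ, Fintype.sum_prod_type, S, sq]
  have hK (b : B) (n : Fin d) (b' : B) (n' : Fin d) : (P b n * P b' n').trace.re
      = if b = b' then if n = n' then κ else c else 1 / d := by
    split_ifs with hb hn
    · subst hb hn; simp [htr3]
    · subst hb; simp [htr3, hn]
    · simp [htr2 b b' hb]
  have hww : (w * w).trace.re = (κ - c) * S := by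
    simp only [w]
    rw [re_trace_sum_smul_mul_sum_smul]
    simp only [Fintype.sum_prod_type, hK]
    exact sum_sum_sum_sum_mul_mul_ite_ite_of_sum_eq_zero a ha κ c _
  have hσσ : (σ * σ).trace.re ≤ 1 - 1 / d := by
    have hpure := hρ.re_trace_mul_self_le
    simp only [σ, sub_mul, mul_sub, Matrix.smul_mul, Matrix.mul_smul, Matrix.one_mul,
      Matrix.mul_one, smul_smul, trace_sub, trace_smul, hρtr, trace_one, Fintype.card_fin,
      Complex.sub_re, Complex.smul_re, RCLike.re_to_complex, Complex.one_re, Complex.natCast_re,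
      smul_eq_mul, one_pow] at hpure ⊢
    field_simp
    nlinarith
  have hcs := hw.re_trace_mul_sq_le hσ
  simp only [RCLike.re_to_complex] at hcs
  rw [hwσ, hww] at hcs
  have hκc : (κ - c) * (1 - 1 / d) = κ - 1 / d := by
    simp only [c]; field_simp; ring
  have hS : 0 ≤ S := by positivity
  have hκc0 : 0 ≤ κ - c := by
    have : 1 ≤ κ * d := by rwa [div_le_iff₀ (by positivity)] at hκ
    rw [sub_nonneg, div_le_iff₀ (by linarith)]
    linarith
  nlinarith [mul_le_mul_of_nonneg_left hσσ (mul_nonneg hκc0 hS)]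

lemma sum_sub_inv_sq {d : ℕ} {p : Fin d → ℝ} (hp : ∑ n, p n = 1) :
    ∑ n, (p n - 1 / d) ^ 2 = ∑ n, p n ^ 2 - 1 / d := by
  have hd : (d : ℝ) ≠ 0 := by
    rintro h
    obtain rfl := Nat.cast_eq_zero.mp h
    simp at hp
  simp only [sub_sq, sum_add_distrib, sum_sub_distrib, ← sum_mul, ← mul_sum, hp, sum_const,
    card_univ, Fintype.card_fin, nsmul_eq_mul]
  field_simp
  ring

lemma sum_rpow_le_rpow_sum {ι : Type*} [Fintype ι] {x : ι → ℝ} (hx : ∀ i, 0 ≤ x i) {t : ℝ}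
    (ht : 1 ≤ t) : ∑ i, x i ^ t ≤ (∑ i, x i) ^ t := by
  have hsplit {y : ℝ} (hy : 0 ≤ y) : y ^ t = y ^ (t - 1) * y := by
    rw [← rpow_add_one' hy (by linarith), sub_add_cancel]
  calc ∑ i, x i ^ t = ∑ i, x i ^ (t - 1) * x i := sum_congr rfl fun i _ ↦ hsplit (hx i)
    _ ≤ ∑ i, (∑ j, x j) ^ (t - 1) * x i :=
      sum_le_sum fun i _ ↦ mul_le_mul_of_nonneg_right (rpow_le_rpow (hx i)
        (single_le_sum (fun j _ ↦ hx j) (mem_univ i)) (by linarith)) (hx i)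
    _ = (∑ i, x i) ^ t := by rw [← mul_sum, hsplit (sum_nonneg fun i _ ↦ hx i)]

lemma exists_pos_of_sum_eq_one {ι : Type*} [Fintype ι] {p : ι → ℝ} (hp : ∑ i, p i = 1) :
    ∃ i, 0 < p i := by
  by_contra! h
  linarith [sum_nonpos (s := univ) fun i _ ↦ h i]

lemma sum_sq_pos_of_sum_eq_one {ι : Type*} [Fintype ι] {p : ι → ℝ} (hp : ∑ i, p i = 1) :
    0 < ∑ i, p i ^ 2 := by
  obtain ⟨i, hi⟩ := exists_pos_of_sum_eq_one hp
  exact sum_pos' (fun j _ ↦ sq_nonneg (p j)) ⟨i, mem_univ i, by positivity⟩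

noncomputable def renyiEntropy {ι : Type*} [Fintype ι] (α : ℝ) (p : ι → ℝ) : ℝ :=
  1 / (1 - α) * Real.log (∑ i, p i ^ α)

lemma mul_log_sum_sq_le_renyiEntropy {ι : Type*} [Fintype ι] {p : ι → ℝ} (hp : ∀ i, 0 ≤ p i)
    (hp1 : ∑ i, p i = 1) {α : ℝ} (hα : 2 ≤ α) :
    α / (2 * (1 - α)) * Real.log (∑ i, p i ^ 2) ≤ renyiEntropy α p := by
  obtain ⟨i, hi⟩ := exists_pos_of_sum_eq_one hp1
  have hpow_pos : 0 < ∑ i, p i ^ α :=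
    sum_pos' (fun j _ ↦ rpow_nonneg (hp j) α) ⟨i, mem_univ i, rpow_pos_of_pos hi α⟩
  have hsq_pos := sum_sq_pos_of_sum_eq_one hp1
  have hpow_le : ∑ i, p i ^ α ≤ (∑ i, p i ^ 2) ^ (α / 2) := by
    calc ∑ i, p i ^ α = ∑ i, (p i ^ 2) ^ (α / 2) := by
          refine sum_congr rfl fun j _ ↦ ?_
          rw [← rpow_natCast, ← rpow_mul (hp j)]
          congr 1
          push_cast
          ring
      _ ≤ _ := sum_rpow_le_rpow_sum (fun j ↦ sq_nonneg (p j)) (by linarith)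
  have hlog := log_le_log hpow_pos hpow_le
  rw [log_rpow hsq_pos] at hlog
  have hneg : 1 / (1 - α) < 0 := by rw [one_div_neg]; linarith
  calc α / (2 * (1 - α)) * Real.log (∑ i, p i ^ 2)
      = 1 / (1 - α) * (α / 2 * Real.log (∑ i, p i ^ 2)) := by
        field_simp
    _ ≤ renyiEntropy α p := mul_le_mul_of_nonpos_left hlog hneg.le

lemma mean_log_le_log_div_card {ι : Type*} [Fintype ι] [Nonempty ι] {C : ι → ℝ}
    (hC : ∀ i, 0 < C i) {M : ℝ} (hM : ∑ i, C i ≤ M) :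
    1 / Fintype.card ι * ∑ i, Real.log (C i) ≤ Real.log (M / Fintype.card ι) := by
  have hcard : (0 : ℝ) < Fintype.card ι := by exact_mod_cast Fintype.card_pos
  have hjensen := strictConcaveOn_log_Ioi.concaveOn.le_map_sum (t := univ)
    (w := fun _ ↦ 1 / (Fintype.card ι : ℝ)) (p := C) (fun _ _ ↦ by positivity)
    (by simp [hcard.ne']) (fun i _ ↦ hC i)
  simp only [smul_eq_mul, ← mul_sum] at hjensen
  have hsum_pos : 0 < ∑ i, C i := sum_pos (fun i _ ↦ hC i) univ_nonempty
  refine hjensen.trans (log_le_log (by positivity) ?_)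
  rw [one_div_mul_eq_div]
  gcongr

theorem stmt10_general (d : ℕ) (hd : 2 ≤ d) (κ : ℝ)
    (hκ1 : 1 / (d : ℝ) < κ)
    (P : Fin (d + 1) → Fin d → Matrix (Fin d) (Fin d) ℂ)
    (hpsd : ∀ b n, (P b n).PosSemidef)
    (hsum : ∀ b, ∑ n, P b n = 1)
    (htr1 : ∀ b n, (P b n).trace = 1)
    (htr2 : ∀ b b', b ≠ b' → ∀ n n', (P b n * P b' n').trace = ((1 / (d : ℝ) : ℝ) : ℂ))
    (htr3 : ∀ b n n', (P b n * P b n').trace =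
      if n = n' then ((κ : ℝ) : ℂ) else (((1 - κ) / ((d : ℝ) - 1) : ℝ) : ℂ))
    (ρ : Matrix (Fin d) (Fin d) ℂ) (hρ : ρ.PosSemidef) (hρtr : ρ.trace = 1)
    (p : Fin (d + 1) → Fin d → ℝ)
    (hp : ∀ b n, ((p b n : ℝ) : ℂ) = (P b n * ρ).trace)
    (α : ℝ) (hα : 2 ≤ α) :
    (1 / ((d : ℝ) + 1)) * (∑ b, ((1 / (1 - α)) * Real.log (∑ n, (p b n) ^ α))) ≥
      (α / (2 * (1 - α))) * Real.log ((κ + 1) / ((d : ℝ) + 1)) := by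
  have hd0 : (d : ℝ) ≠ 0 := by positivity
  have hp_nonneg b n : 0 ≤ p b n := nonneg_of_ofReal_eq_trace_mul (hpsd b n) hρ (hp b n)
  have hp_sum b : ∑ n, p b n = 1 := sum_eq_one_of_ofReal_eq_trace_mul (hsum b) hρtr (hp b)
  have hcollision : ∑ b, ∑ n, p b n ^ 2 ≤ κ + 1 := by
    have := sum_sum_sq_sub_inv_le d hd κ hκ1.le P (fun b n ↦ (hpsd b n).1) hsum htr1 htr2
      htr3 ρ hρ hρtr p hp
    simp only [sum_sub_inv_sq (hp_sum _), sum_sub_distrib, sum_const, card_univ,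
      Fintype.card_fin, nsmul_eq_mul] at this
    have hbases : ((d + 1 : ℕ) : ℝ) * (1 / d) = 1 + 1 / d := by push_cast; field_simp
    linarith
  have hmean := mean_log_le_log_div_card (fun b ↦ sum_sq_pos_of_sum_eq_one (hp_sum b))
    hcollision
  rw [Fintype.card_fin] at hmean
  have hβ : α / (2 * (1 - α)) ≤ 0 := div_nonpos_of_nonneg_of_nonpos (by linarith) (by linarith)
  calc (1 / ((d : ℝ) + 1)) * ∑ b, renyiEntropy α (p b)
      ≥ (1 / ((d : ℝ) + 1)) * ∑ b, α / (2 * (1 - α)) * Real.log (∑ n, p b n ^ 2) := by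
        gcongr with b
        exact mul_log_sum_sq_le_renyiEntropy (hp_nonneg b) (hp_sum b) hα
    _ = α / (2 * (1 - α)) * ((1 / ((d : ℝ) + 1)) * ∑ b, Real.log (∑ n, p b n ^ 2)) := by
        rw [← mul_sum]; ring
    _ ≥ α / (2 * (1 - α)) * Real.log ((κ + 1) / ((d : ℝ) + 1)) := by
        push_cast at hmean
        exact mul_le_mul_of_nonpos_left hmean hβ

theorem stmt10 (d : ℕ) (hd : 2 ≤ d) (κ : ℝ)
    (hκ1 : 1 / (d : ℝ) < κ) (hκ2 : κ ≤ 1)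
    (P : Fin (d + 1) → Fin d → Matrix (Fin d) (Fin d) ℂ)
    (hpsd : ∀ b n, (P b n).PosSemidef)
    (hsum : ∀ b, ∑ n, P b n = 1)
    (htr1 : ∀ b n, (P b n).trace = 1)
    (htr2 : ∀ b b', b ≠ b' → ∀ n n', (P b n * P b' n').trace = ((1 / (d : ℝ) : ℝ) : ℂ))
    (htr3 : ∀ b n n', (P b n * P b n').trace =
      if n = n' then ((κ : ℝ) : ℂ) else (((1 - κ) / ((d : ℝ) - 1) : ℝ) : ℂ))
    (ρ : Matrix (Fin d) (Fin d) ℂ) (hρ : ρ.PosSemidef) (hρtr : ρ.trace = 1)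
    (p : Fin (d + 1) → Fin d → ℝ)
    (hp : ∀ b n, ((p b n : ℝ) : ℂ) = (P b n * ρ).trace)
    (α : ℝ) (hα : 2 ≤ α) :
    (1 / ((d : ℝ) + 1)) * (∑ b, ((1 / (1 - α)) * Real.log (∑ n, (p b n) ^ α))) ≥
      (α / (2 * (1 - α))) * Real.log ((κ + 1) / ((d : ℝ) + 1)) :=
  stmt10_general d hd κ hκ1 P hpsd hsum htr1 htr2 htr3 ρ hρ hρtr p hp α hα
end

section
/- Let d ≥ 2, let {𝒫^(b)}_{b=1}^{d+1} be a set of d+1 mutually unbiased measurements on ℂ^d with efficiency parameter κ, and let ρ be a density operator on ℂ^d. Then (1/(d+1)) Σ_{b=1}^{d+1} R_∞(𝒫^(b)|ρ) ≥ −ln g_d(C(κ,ρ)/(d+1)), where g_d(x) = (1 + √(d−1)·√(dx−1))/d and C(κ,ρ) = Σ_{b=1}^{d+1} Σ_{n=1}^{d} (p_n^(b))². -/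
open Matrix Finset Real
open scoped ComplexOrder

/-!
For any probability vector `q` on `n` outcomes, Cauchy–Schwarz on the entries other than `q i`
gives `(n q i - 1)² ≤ (n - 1)(n ∑ q² - 1)`, i.e. `max q ≤ g_n (∑ q²)`. Since `log ∘ g_n` is concave,
Jensen's inequality turns the per-measurement bounds on the min-entropies into a bound on their
average in terms of the averaged collision probability `C / (d + 1)`. Only the fact that each
measurement yields a probability distribution enters.
-/

/-- The function `g_d` of the paper. -/
noncomputable def maxProbBound (d s : ℝ) : ℝ := (1 + √(d - 1) * √(d * s - 1)) / d

lemma maxProbBound_pos {d : ℝ} (hd : 0 < d) (s : ℝ) : 0 < maxProbBound d s := by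
  unfold maxProbBound; positivity

lemma concaveOn_maxProbBound {d : ℝ} (hd : 0 < d) :
    ConcaveOn ℝ (Set.Ici (1 / d)) (maxProbBound d) := by
  refine ⟨convex_Ici _, fun x hx y hy a b ha hb hab => ?_⟩
  have hsub : ∀ {z : ℝ}, z ∈ Set.Ici (1 / d) → 0 ≤ d * z - 1 := fun hz => by
    have := (div_le_iff₀' hd).mp hz; linarith
  have hsqrt := Real.strictConcaveOn_sqrt.concaveOn.2 (hsub hx) (hsub hy) ha hb hab
  have hlin : a • (d * x - 1) + b • (d * y - 1) = d * (a • x + b • y) - 1 := by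
    simp only [smul_eq_mul]; linear_combination -hab
  rw [hlin] at hsqrt
  simp only [maxProbBound, smul_eq_mul] at hsqrt ⊢
  calc a * ((1 + √(d - 1) * √(d * x - 1)) / d) + b * ((1 + √(d - 1) * √(d * y - 1)) / d)
      = (1 + √(d - 1) * (a * √(d * x - 1) + b * √(d * y - 1))) / d := by
        field_simp; linear_combination hab
    _ ≤ (1 + √(d - 1) * √(d * (a * x + b * y) - 1)) / d := by gcongr

lemma concaveOn_log_maxProbBound {d : ℝ} (hd : 0 < d) :
    ConcaveOn ℝ (Set.Ici (1 / d)) (fun s => log (maxProbBound d s)) := by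
  refine ⟨convex_Ici _, fun x hx y hy a b ha hb hab => ?_⟩
  calc a • log (maxProbBound d x) + b • log (maxProbBound d y)
      ≤ log (a • maxProbBound d x + b • maxProbBound d y) :=
        strictConcaveOn_log_Ioi.concaveOn.2 (maxProbBound_pos hd x) (maxProbBound_pos hd y)
          ha hb hab
    _ ≤ log (maxProbBound d (a • x + b • y)) :=
        log_le_log
          (convex_Ioi (0 : ℝ) (maxProbBound_pos hd x) (maxProbBound_pos hd y) ha hb hab)
          ((concaveOn_maxProbBound hd).2 hx hy ha hb hab)

section ProbabilityVector

variable {ι : Type*} [Fintype ι] {q : ι → ℝ}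

lemma nonempty_of_sum_eq_one (hq : ∑ i, q i = 1) : Nonempty ι :=
  univ_nonempty_iff.mp (nonempty_of_sum_ne_zero (hq ▸ one_ne_zero))

lemma inv_card_le_sum_sq (hq : ∑ i, q i = 1) : 1 / (Fintype.card ι : ℝ) ≤ ∑ i, q i ^ 2 := by
  have := nonempty_of_sum_eq_one hq
  have hcs : (∑ i, q i) ^ 2 ≤ (Fintype.card ι : ℝ) * ∑ i, q i ^ 2 := by
    simpa using sq_sum_le_card_mul_sum_sq (s := univ) (f := q)
  rw [hq] at hcs
  rw [div_le_iff₀' (by exact_mod_cast Fintype.card_pos)]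
  linarith

lemma le_maxProbBound (hq : ∑ i, q i = 1) (i : ι) :
    q i ≤ maxProbBound (Fintype.card ι) (∑ j, q j ^ 2) := by
  classical
  have : Nonempty ι := ⟨i⟩
  set n : ℝ := (Fintype.card ι : ℝ)
  set s := ∑ j, q j ^ 2 with hs
  have hn : 1 ≤ n := Nat.one_le_cast.mpr Fintype.card_pos
  have hrest : ∑ j ∈ univ.erase i, q j = 1 - q i := by
    rw [← hq, ← add_sum_erase univ q (mem_univ i)]; ring
  have hrest_sq : ∑ j ∈ univ.erase i, q j ^ 2 = s - q i ^ 2 := by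
    rw [hs, ← add_sum_erase univ (q · ^ 2) (mem_univ i)]; ring
  have hcard : ((univ.erase i).card : ℝ) = n - 1 := by
    rw [card_erase_of_mem (mem_univ i), card_univ, Nat.cast_pred Fintype.card_pos]
  have hcs : (1 - q i) ^ 2 ≤ (n - 1) * (s - q i ^ 2) := by
    simpa only [hrest, hrest_sq, hcard] using sq_sum_le_card_mul_sum_sq (s := univ.erase i) (f := q)
  have hsq : (n * q i - 1) ^ 2 ≤ (n - 1) * (n * s - 1) := by
    nlinarith [mul_le_mul_of_nonneg_left hcs (by linarith : (0 : ℝ) ≤ n)]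
  have hle : n * q i - 1 ≤ √(n - 1) * √(n * s - 1) := by
    rw [← sqrt_mul (by linarith)]
    exact (le_abs_self _).trans (abs_le_sqrt hsq)
  rw [maxProbBound, le_div_iff₀' (by linarith)]
  linarith

lemma iSup_le_maxProbBound (hq : ∑ i, q i = 1) :
    ⨆ i, q i ≤ maxProbBound (Fintype.card ι) (∑ j, q j ^ 2) :=
  have := nonempty_of_sum_eq_one hq
  ciSup_le (le_maxProbBound hq)

lemma iSup_pos_of_sum_eq_one (hq : ∑ i, q i = 1) : 0 < ⨆ i, q i := by
  have := nonempty_of_sum_eq_one hq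
  by_contra! h
  have : ∑ i, q i ≤ 0 := sum_nonpos fun i _ => (le_ciSup (Finite.bddAbove_range q) i).trans h
  linarith

end ProbabilityVector

lemma neg_log_maxProbBound_avg_le {β ι : Type*} [Fintype β] [Nonempty β] [Fintype ι]
    (q : β → ι → ℝ) (hq : ∀ b, ∑ i, q b i = 1) :
    -log (maxProbBound (Fintype.card ι) ((∑ b, ∑ i, q b i ^ 2) / Fintype.card β)) ≤
      (1 / Fintype.card β) * ∑ b, -log (⨆ i, q b i) := by
  have : Nonempty ι := nonempty_of_sum_eq_one (hq (Classical.arbitrary β))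
  set w : ℝ := 1 / Fintype.card β
  have hw : 0 ≤ w := by positivity
  have hw_sum : ∑ _b : β, w = 1 := by simp [w]
  have hjensen := (concaveOn_log_maxProbBound (d := Fintype.card ι) (by exact_mod_cast
    Fintype.card_pos)).le_map_sum (t := univ) (w := fun _ => w) (p := fun b => ∑ i, q b i ^ 2)
    (fun _ _ => hw) hw_sum (fun b _ => inv_card_le_sum_sq (hq b))
  have havg : ∑ b, w • ∑ i, q b i ^ 2 = (∑ b, ∑ i, q b i ^ 2) / Fintype.card β := by
    simp only [smul_eq_mul, ← mul_sum, w]; ring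
  rw [havg] at hjensen
  simp only [smul_eq_mul] at hjensen
  calc -log (maxProbBound (Fintype.card ι) ((∑ b, ∑ i, q b i ^ 2) / Fintype.card β))
      ≤ ∑ b, w * -log (maxProbBound (Fintype.card ι) (∑ i, q b i ^ 2)) := by
        simp only [mul_neg, sum_neg_distrib]; linarith
    _ ≤ ∑ b, w * -log (⨆ i, q b i) := by
        gcongr with b
        exacts [iSup_pos_of_sum_eq_one (hq b), iSup_le_maxProbBound (hq b)]
    _ = w * ∑ b, -log (⨆ i, q b i) := (mul_sum ..).symm

lemma sum_trace_mul_eq_one {ι m : Type*} [Fintype ι] [Fintype m] [DecidableEq m]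
    {P : ι → Matrix m m ℂ} (hP : ∑ i, P i = 1) {ρ : Matrix m m ℂ} (hρ : ρ.trace = 1) :
    ∑ i, (P i * ρ).trace = 1 := by
  rw [← trace_sum, ← sum_mul, hP, one_mul, hρ]

theorem stmt11_general (d : ℕ)
    (P : Fin (d + 1) → Fin d → Matrix (Fin d) (Fin d) ℂ)
    (hsum : ∀ b, ∑ n, P b n = 1)
    (ρ : Matrix (Fin d) (Fin d) ℂ) (hρtr : ρ.trace = 1)
    (p : Fin (d + 1) → Fin d → ℝ)
    (hp : ∀ b n, ((p b n : ℝ) : ℂ) = (P b n * ρ).trace) :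
    (1 / ((d : ℝ) + 1)) * (∑ b, (-Real.log (⨆ n, p b n))) ≥
      -Real.log ((1 + Real.sqrt ((d : ℝ) - 1) * Real.sqrt ((d : ℝ) * ((∑ b, ∑ n, (p b n) ^ 2) / ((d : ℝ) + 1)) - 1)) / (d : ℝ)) := by
  have hrow (b : Fin (d + 1)) : ∑ n, p b n = 1 := by
    have : ((∑ n, p b n : ℝ) : ℂ) = 1 := by
      push_cast [hp]; exact sum_trace_mul_eq_one (hsum b) hρtr
    exact_mod_cast this
  simpa [maxProbBound] using neg_log_maxProbBound_avg_le p hrow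

theorem stmt11 (d : ℕ) (hd : 2 ≤ d) (κ : ℝ)
    (hκ1 : 1 / (d : ℝ) < κ) (hκ2 : κ ≤ 1)
    (P : Fin (d + 1) → Fin d → Matrix (Fin d) (Fin d) ℂ)
    (hpsd : ∀ b n, (P b n).PosSemidef)
    (hsum : ∀ b, ∑ n, P b n = 1)
    (htr1 : ∀ b n, (P b n).trace = 1)
    (htr2 : ∀ b b', b ≠ b' → ∀ n n', (P b n * P b' n').trace = ((1 / (d : ℝ) : ℝ) : ℂ))
    (htr3 : ∀ b n n', (P b n * P b n').trace =
      if n = n' then ((κ : ℝ) : ℂ) else (((1 - κ) / ((d : ℝ) - 1) : ℝ) : ℂ))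
    (ρ : Matrix (Fin d) (Fin d) ℂ) (hρ : ρ.PosSemidef) (hρtr : ρ.trace = 1)
    (p : Fin (d + 1) → Fin d → ℝ)
    (hp : ∀ b n, ((p b n : ℝ) : ℂ) = (P b n * ρ).trace) :
    (1 / ((d : ℝ) + 1)) * (∑ b, (-Real.log (⨆ n, p b n))) ≥
      -Real.log ((1 + Real.sqrt ((d : ℝ) - 1) * Real.sqrt ((d : ℝ) * ((∑ b, ∑ n, (p b n) ^ 2) / ((d : ℝ) + 1)) - 1)) / (d : ℝ)) :=
  stmt11_general d P hsum ρ hρtr p hp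
end
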